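/- arXiv:2410.15340 — 3 statements merged into one kernel-verified Lean document; each statement's English description precedes it below -/
import Mathlib

section
/- For each fixed j with 1 ≤ j ≤ n, the elements X = x²y + t_j x and Y = y' of R' satisfy XY − YX = t_0 and the invertibility relations needed to define a chart transition; in particular (x²y + t_j x)·y' − y'·(x²y + t_j x) = t_0 in R', so there is a well-defined B-algebra homomorphism φ⁻_j : R → R' with φ⁻_j(x) = x²y + t_j x and φ⁻_j(y) = y'. -/
/-!
Context: `B = ℂ[t₀,…,tₙ]`, `R = B⟨x,y⟩/(xy − yx − t₀)`,
`R' = B⟨x,y,y'⟩/(xy − yx − t₀, xy' − 1, y'x − 1)`.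
Statement 1: for `1 ≤ j ≤ n`, the elements `X = x²y + tⱼx` and `Y = y'` of `R'` satisfy
`XY − YX = t₀`, and there is a `B`-algebra homomorphism `φ⁻ⱼ : R → R'` with
`φ⁻ⱼ(x) = x²y + tⱼx`, `φ⁻ⱼ(y) = y'`.
-/

noncomputable section

/-- The polynomial base ring `B = ℂ[t₀,…,tₙ]`. -/
abbrev Bpoly (n : ℕ) : Type := MvPolynomial (Fin (n + 1)) ℂ

/-- The defining relation `xy = yx + t₀` of `R`, with `x = ι 0`, `y = ι 1`. -/
inductive Rrel (n : ℕ) : FreeAlgebra (Bpoly n) (Fin 2) → FreeAlgebra (Bpoly n) (Fin 2) → Prop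
  | comm : Rrel n (FreeAlgebra.ι (Bpoly n) 0 * FreeAlgebra.ι (Bpoly n) 1)
      (FreeAlgebra.ι (Bpoly n) 1 * FreeAlgebra.ι (Bpoly n) 0 +
        algebraMap (Bpoly n) (FreeAlgebra (Bpoly n) (Fin 2)) (MvPolynomial.X 0))

/-- `R = B⟨x,y⟩/(xy − yx − t₀)`. -/
abbrev Rring (n : ℕ) : Type := RingQuot (Rrel n)

/-- `x ∈ R`. -/
def Rx (n : ℕ) : Rring n := RingQuot.mkAlgHom (Bpoly n) (Rrel n) (FreeAlgebra.ι (Bpoly n) 0)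

/-- `y ∈ R`. -/
def Ry (n : ℕ) : Rring n := RingQuot.mkAlgHom (Bpoly n) (Rrel n) (FreeAlgebra.ι (Bpoly n) 1)

/-- The defining relations `xy = yx + t₀`, `xy' = 1`, `y'x = 1` of `R'`,
with `x = ι 0`, `y = ι 1`, `y' = ι 2`. -/
inductive R'rel (n : ℕ) : FreeAlgebra (Bpoly n) (Fin 3) → FreeAlgebra (Bpoly n) (Fin 3) → Prop
  | comm : R'rel n (FreeAlgebra.ι (Bpoly n) 0 * FreeAlgebra.ι (Bpoly n) 1)
      (FreeAlgebra.ι (Bpoly n) 1 * FreeAlgebra.ι (Bpoly n) 0 +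
        algebraMap (Bpoly n) (FreeAlgebra (Bpoly n) (Fin 3)) (MvPolynomial.X 0))
  | xinv : R'rel n (FreeAlgebra.ι (Bpoly n) 0 * FreeAlgebra.ι (Bpoly n) 2) 1
  | invx : R'rel n (FreeAlgebra.ι (Bpoly n) 2 * FreeAlgebra.ι (Bpoly n) 0) 1

/-- `R' = B⟨x,y,y'⟩/(xy − yx − t₀, xy' − 1, y'x − 1)`. -/
abbrev R'ring (n : ℕ) : Type := RingQuot (R'rel n)

/-- `x ∈ R'`. -/
def R'x (n : ℕ) : R'ring n := RingQuot.mkAlgHom (Bpoly n) (R'rel n) (FreeAlgebra.ι (Bpoly n) 0)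

/-- `y ∈ R'`. -/
def R'y (n : ℕ) : R'ring n := RingQuot.mkAlgHom (Bpoly n) (R'rel n) (FreeAlgebra.ι (Bpoly n) 1)

/-- `y' ∈ R'`, the two-sided inverse of `x`. -/
def R'yinv (n : ℕ) : R'ring n :=
  RingQuot.mkAlgHom (Bpoly n) (R'rel n) (FreeAlgebra.ι (Bpoly n) 2)

/-- `tⱼ ∈ R'` (the image of the deformation parameter `tⱼ`). -/
def R't (n : ℕ) (j : ℕ) : R'ring n :=
  algebraMap (Bpoly n) (R'ring n) (MvPolynomial.X (Fin.ofNat (n + 1) j))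

-- basic relations in R'
lemma R'comm (n : ℕ) : R'x n * R'y n = R'y n * R'x n + R't n 0 := by
  have := RingQuot.mkAlgHom_rel (Bpoly n) (R'rel.comm (n := n))
  simpa [R'x, R'y, R't, Fin.val_zero] using this

lemma R'xinv (n : ℕ) : R'x n * R'yinv n = 1 := by
  have := RingQuot.mkAlgHom_rel (Bpoly n) (R'rel.xinv (n := n))
  simpa [R'x, R'yinv] using this

lemma R'invx (n : ℕ) : R'yinv n * R'x n = 1 := by
  have := RingQuot.mkAlgHom_rel (Bpoly n) (R'rel.invx (n := n))
  simpa [R'x, R'yinv] using this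

lemma Rt_comm (n j : ℕ) (z : R'ring n) : R't n j * z = z * R't n j := by
  simp only [R't]; exact Algebra.commutes _ z

lemma key' (n : ℕ) (j : ℕ) :
    (R'x n ^ 2 * R'y n + R't n j * R'x n) * R'yinv n =
        R'yinv n * (R'x n ^ 2 * R'y n + R't n j * R'x n) + R't n 0 := by
  set a := R'x n; set b := R'y n; set c := R'yinv n; set t := R't n 0; set s := R't n j
  have hc : a * b = b * a + t := R'comm n
  have hac : a * c = 1 := R'xinv n
  have hca : c * a = 1 := R'invx n
  have ht : ∀ z : R'ring n, t * z = z * t := Rt_comm n 0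
  have hs : ∀ z : R'ring n, s * z = z * s := Rt_comm n j
  have h1 : a ^ 2 * b = b * a ^ 2 + t * a + t * a := by
    calc a ^ 2 * b = a * (a * b) := by noncomm_ring
      _ = a * (b * a + t) := by rw [hc]
      _ = a * b * a + a * t := by noncomm_ring
      _ = (b * a + t) * a + t * a := by rw [hc, ht]
      _ = b * a ^ 2 + t * a + t * a := by noncomm_ring
  have h2 : (a ^ 2 * b) * c = b * a + t + t := by
    rw [h1, add_mul, add_mul,
      show b * a ^ 2 * c = b * a from by rw [pow_two, mul_assoc, mul_assoc, hac, mul_one],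
      mul_assoc t, hac, mul_one]
  have h3 : c * (a ^ 2 * b) = b * a + t := by
    rw [pow_two, mul_assoc a, ← mul_assoc, ← mul_assoc, hca, one_mul, hc]
  have h4 : s * a * c = s := by rw [mul_assoc, hac, mul_one]
  have h5 : c * (s * a) = s := by rw [← mul_assoc, ← hs c, mul_assoc, hca, mul_one]
  calc (a ^ 2 * b + s * a) * c = (a ^ 2 * b) * c + s * a * c := by rw [add_mul]
    _ = (b * a + t + t) + s := by rw [h2, h4]
    _ = ((b * a + t) + s) + t := by abel
    _ = (c * (a ^ 2 * b) + c * (s * a)) + t := by rw [h3, h5]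
    _ = c * (a ^ 2 * b + s * a) + t := by rw [mul_add]

lemma key (n : ℕ) (j : ℕ) :
    (R'x n ^ 2 * R'y n + R't n j * R'x n) * R'yinv n -
        R'yinv n * (R'x n ^ 2 * R'y n + R't n j * R'x n) = R't n 0 := by
  rw [key' n j]; abel

theorem stmt1 (n : ℕ) (hn : 1 ≤ n) (j : ℕ) (hj1 : 1 ≤ j) (hjn : j ≤ n) :
    (R'x n ^ 2 * R'y n + R't n j * R'x n) * R'yinv n -
        R'yinv n * (R'x n ^ 2 * R'y n + R't n j * R'x n) = R't n 0 ∧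
    ∃ φ : Rring n →ₐ[Bpoly n] R'ring n,
      φ (Rx n) = R'x n ^ 2 * R'y n + R't n j * R'x n ∧ φ (Ry n) = R'yinv n := by
  refine ⟨key n j, ?_⟩
  set X : R'ring n := R'x n ^ 2 * R'y n + R't n j * R'x n with hX
  let f : FreeAlgebra (Bpoly n) (Fin 2) →ₐ[Bpoly n] R'ring n :=
    FreeAlgebra.lift (Bpoly n) (fun i => if i = 0 then X else R'yinv n)
  have hf0 : f (FreeAlgebra.ι (Bpoly n) 0) = X := by simp [f]
  have hf1 : f (FreeAlgebra.ι (Bpoly n) 1) = R'yinv n := by simp [f]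
  have hw : ∀ ⦃x y⦄, Rrel n x y → f x = f y := by
    intro x y h
    cases h with
    | comm =>
      simp only [map_mul, map_add, hf0, hf1, AlgHom.commutes]
      have := key n j
      have h0 : (algebraMap (Bpoly n) (R'ring n)) (MvPolynomial.X 0) = R't n 0 := by
        simp [R't]
      rw [h0]
      exact key' n j
  refine ⟨RingQuot.liftAlgHom (Bpoly n) ⟨f, hw⟩, ?_, ?_⟩
  · rw [Rx, RingQuot.liftAlgHom_mkAlgHom_apply, hf0]
  · rw [Ry, RingQuot.liftAlgHom_mkAlgHom_apply, hf1]

end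
end

section
/- The B-algebra homomorphisms φ⁺ : R → R' (with φ⁺(x) = x, φ⁺(y) = y) and, for each 1 ≤ j ≤ n, φ⁻_j : R → R' (with φ⁻_j(x) = x²y + t_j x, φ⁻_j(y) = y') are injective. -/
set_option synthInstance.maxHeartbeats 1000000
set_option maxHeartbeats 1000000

/-!
Context: `B = ℂ[t₀,…,tₙ]`, `R = B⟨x,y⟩/(xy − yx − t₀)`,
`R' = B⟨x,y,y'⟩/(xy − yx − t₀, xy' − 1, y'x − 1)`.
Statement 2: the `B`-algebra homomorphisms `φ⁺ : R → R'` (with `φ⁺(x) = x`, `φ⁺(y) = y`)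
and, for each `1 ≤ j ≤ n`, `φ⁻ⱼ : R → R'` (with `φ⁻ⱼ(x) = x²y + tⱼx`, `φ⁻ⱼ(y) = y'`)
are injective.
-/

noncomputable section

namespace NCAux

open Polynomial

variable (n : ℕ)

abbrev Apoly (n : ℕ) : Type := Polynomial (Bpoly n)
abbrev Mmod (n : ℕ) : Type := ℤ →₀ Apoly n

def t0 (n : ℕ) : Bpoly n := MvPolynomial.X 0

lemma t0_ne_zero : t0 n ≠ 0 := MvPolynomial.X_ne_zero _

/-! ### A faithful representation of `R'` on `M = ⊕_{k ∈ ℤ} B[s]` -/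

/-- shift-with-multiplier operator on `M = ⊕_{k∈ℤ} A` -/
def shiftOp (g : ℤ → Apoly n) (sh : ℤ) : Module.End (Bpoly n) (Mmod n) :=
  Finsupp.lsum (Bpoly n) fun k =>
    (Finsupp.lsingle (k + sh)).comp (LinearMap.mulLeft (Bpoly n) (g k))

@[simp] lemma shiftOp_single (g : ℤ → Apoly n) (sh k : ℤ) (p : Apoly n) :
    shiftOp n g sh (Finsupp.single k p) = Finsupp.single (k + sh) (g k * p) := by
  rw [shiftOp, Finsupp.lsum_single, LinearMap.comp_apply, LinearMap.mulLeft_apply,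
    Finsupp.lsingle_apply]

lemma opa_pow (a : ℤ → Apoly n) (m : ℕ) (k : ℤ) (p : Apoly n) :
    ((shiftOp n a 1) ^ m) (Finsupp.single k p)
      = Finsupp.single (k + m) ((∏ u ∈ Finset.range m, a (k + u)) * p) := by
  induction m generalizing k p with
  | zero => simp
  | succ m ih =>
    rw [pow_succ, Module.End.mul_apply, shiftOp_single, ih]
    have h1 : k + 1 + (m : ℤ) = k + ((m : ℕ) + 1 : ℕ) := by push_cast; ring
    have h2 : (∏ u ∈ Finset.range (m + 1), a (k + u))
        = (∏ u ∈ Finset.range m, a (k + 1 + u)) * a k := by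
      rw [Finset.prod_range_succ']
      congr 1
      · exact Finset.prod_congr rfl fun u _ => by congr 1; push_cast; ring
      · congr 1; push_cast; ring
    rw [h2, mul_assoc, h1]

lemma opb_pow (b : ℤ → Apoly n) (i : ℕ) (k : ℤ) (p : Apoly n) :
    ((shiftOp n b (-1)) ^ i) (Finsupp.single k p)
      = Finsupp.single (k - i) ((∏ u ∈ Finset.range i, b (k - u)) * p) := by
  induction i generalizing k p with
  | zero => simp
  | succ i ih =>
    rw [pow_succ, Module.End.mul_apply, shiftOp_single, ih]
    have h1 : k + -1 - (i : ℤ) = k - ((i : ℕ) + 1 : ℕ) := by push_cast; ring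
    have h2 : (∏ u ∈ Finset.range (i + 1), b (k - u))
        = (∏ u ∈ Finset.range i, b (k + -1 - u)) * b k := by
      rw [Finset.prod_range_succ']
      congr 1
      · exact Finset.prod_congr rfl fun u _ => by congr 1; push_cast; ring
      · congr 1; push_cast; ring
    rw [h2, mul_assoc, h1]

/-- the multiplier for the action of `y` : `y ⋅ X^k = -t₀(s+k) X^{k-1}`. -/
def bb (k : ℤ) : Apoly n := C (-(t0 n)) * X + C (-(t0 n * (k : Bpoly n)))

lemma bb_succ (k : ℤ) : bb n (k + 1) + C (t0 n) = bb n k := by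
  rw [bb, bb, add_assoc, ← map_add]
  congr 2
  push_cast
  ring

lemma bb_natDegree (k : ℤ) : (bb n k).natDegree = 1 := by
  rw [bb]
  exact natDegree_linear (neg_ne_zero.2 (t0_ne_zero n))

lemma bb_ne_zero (k : ℤ) : bb n k ≠ 0 := by
  intro h
  have h1 := bb_natDegree n k
  rw [h, natDegree_zero] at h1
  exact absurd h1 (by norm_num)

def Uop : Module.End (Bpoly n) (Mmod n) := shiftOp n (fun _ => 1) 1
def Nop : Module.End (Bpoly n) (Mmod n) := shiftOp n (bb n) (-1)
def Dop : Module.End (Bpoly n) (Mmod n) := shiftOp n (fun _ => 1) (-1)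

lemma relUN : Uop n * Nop n = Nop n * Uop n
    + algebraMap (Bpoly n) (Module.End (Bpoly n) (Mmod n)) (t0 n) := by
  apply Finsupp.lhom_ext
  intro k p
  rw [Module.End.mul_apply, LinearMap.add_apply, Module.End.mul_apply]
  rw [Uop, Nop, shiftOp_single, shiftOp_single, shiftOp_single, shiftOp_single,
    Module.algebraMap_end_apply, Finsupp.smul_single]
  have h1 : k + -1 + 1 = k := by ring
  have h2 : k + 1 + -1 = k := by ring
  rw [h1, h2, ← Finsupp.single_add]
  congr 1
  rw [one_mul, one_mul, Algebra.smul_def, Polynomial.algebraMap_eq, ← add_mul, bb_succ]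

lemma relUD : Uop n * Dop n = 1 := by
  apply Finsupp.lhom_ext
  intro k p
  rw [Module.End.mul_apply, Uop, Dop, shiftOp_single, shiftOp_single, Module.End.one_apply]
  have h1 : k + -1 + 1 = k := by ring
  rw [h1, one_mul, one_mul]

lemma relDU : Dop n * Uop n = 1 := by
  apply Finsupp.lhom_ext
  intro k p
  rw [Module.End.mul_apply, Uop, Dop, shiftOp_single, shiftOp_single, Module.End.one_apply]
  have h1 : k + 1 + -1 = k := by ring
  rw [h1, one_mul, one_mul]

def ΨA : FreeAlgebra (Bpoly n) (Fin 3) →ₐ[Bpoly n] Module.End (Bpoly n) (Mmod n) :=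
  FreeAlgebra.lift (Bpoly n) ![Uop n, Nop n, Dop n]

lemma ΨA_rel : ∀ ⦃x y : FreeAlgebra (Bpoly n) (Fin 3)⦄, R'rel n x y → ΨA n x = ΨA n y := by
  intro x y h
  cases h with
  | comm =>
      simp only [map_mul, map_add, AlgHom.commutes, ΨA, FreeAlgebra.lift_ι_apply,
        Matrix.cons_val_zero, Matrix.cons_val_one, Matrix.head_cons]
      exact relUN n
  | xinv =>
      simp only [map_mul, map_one, ΨA, FreeAlgebra.lift_ι_apply,
        Matrix.cons_val_zero, Matrix.cons_val_two, Matrix.tail_cons, Matrix.head_cons]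
      exact relUD n
  | invx =>
      simp only [map_mul, map_one, ΨA, FreeAlgebra.lift_ι_apply,
        Matrix.cons_val_zero, Matrix.cons_val_two, Matrix.tail_cons, Matrix.head_cons]
      exact relDU n

def Ψ : R'ring n →ₐ[Bpoly n] Module.End (Bpoly n) (Mmod n) :=
  RingQuot.liftAlgHom (Bpoly n) ⟨ΨA n, ΨA_rel n⟩

lemma Ψ_x : Ψ n (R'x n) = Uop n := by
  rw [R'x, Ψ, RingQuot.liftAlgHom_mkAlgHom_apply, ΨA, FreeAlgebra.lift_ι_apply]
  rfl

lemma Ψ_y : Ψ n (R'y n) = Nop n := by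
  rw [R'y, Ψ, RingQuot.liftAlgHom_mkAlgHom_apply, ΨA, FreeAlgebra.lift_ι_apply]
  rfl

lemma Ψ_yinv : Ψ n (R'yinv n) = Dop n := by
  rw [R'yinv, Ψ, RingQuot.liftAlgHom_mkAlgHom_apply, ΨA, FreeAlgebra.lift_ι_apply]
  rfl

/-! ### Normal-form spanning of `R` -/

lemma rel_R : Rx n * Ry n = Ry n * Rx n + algebraMap (Bpoly n) (Rring n) (t0 n) := by
  have h := RingQuot.mkAlgHom_rel (Bpoly n) (Rrel.comm (n := n))
  rw [map_mul, map_add, map_mul, AlgHom.commutes] at h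
  exact h

/-- `x yⁱ⁺¹ = yⁱ⁺¹ x + (i+1) t₀ yⁱ` -/
lemma comm_pow : ∀ i : ℕ, Rx n * Ry n ^ (i + 1) = Ry n ^ (i + 1) * Rx n
    + (i + 1) • (algebraMap (Bpoly n) (Rring n) (t0 n) * Ry n ^ i) := by
  intro i
  induction i with
  | zero => simpa using rel_R n
  | succ i ih =>
    have step : Rx n * Ry n ^ (i + 2) = (Rx n * Ry n ^ (i + 1)) * Ry n := by
      rw [mul_assoc, ← pow_succ]
    rw [step, ih, add_mul, mul_assoc, rel_R, mul_add, ← mul_assoc, ← pow_succ,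
      smul_mul_assoc, mul_assoc, ← pow_succ]
    rw [← Algebra.commutes (t0 n) (Ry n ^ (i + 1))]
    rw [succ_nsmul ((algebraMap (Bpoly n) (Rring n) (t0 n) * Ry n ^ (i + 1))) (i + 1)]
    abel

def vmon (p : ℕ × ℕ) : Rring n := Ry n ^ p.1 * Rx n ^ p.2

def Tspan : Submodule (Bpoly n) (Rring n) :=
  Submodule.span (Bpoly n) (Set.range (vmon n))

lemma vmon_mem (p : ℕ × ℕ) : vmon n p ∈ Tspan n :=
  Submodule.subset_span ⟨p, rfl⟩

lemma mul_y_mem {s : Rring n} (hs : s ∈ Tspan n) : Ry n * s ∈ Tspan n := by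
  induction hs using Submodule.span_induction with
  | mem z hz =>
      obtain ⟨p, rfl⟩ := hz
      have : Ry n * vmon n p = vmon n (p.1 + 1, p.2) := by
        rw [vmon, vmon, ← mul_assoc, ← pow_succ']
      rw [this]; exact vmon_mem n _
  | zero => rw [mul_zero]; exact zero_mem _
  | add x y hx hy hx' hy' => rw [mul_add]; exact add_mem hx' hy'
  | smul a x hx hx' => rw [mul_smul_comm]; exact Submodule.smul_mem _ _ hx'

lemma mul_x_mem {s : Rring n} (hs : s ∈ Tspan n) : Rx n * s ∈ Tspan n := by
  induction hs using Submodule.span_induction with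
  | mem z hz =>
      obtain ⟨⟨i, m⟩, rfl⟩ := hz
      match i with
      | 0 =>
          have : Rx n * vmon n (0, m) = vmon n (0, m + 1) := by
            rw [vmon, vmon, pow_zero, one_mul, one_mul, ← pow_succ']
          rw [this]; exact vmon_mem n _
      | i + 1 =>
          have : Rx n * vmon n (i + 1, m) = vmon n (i + 1, m + 1)
              + (i + 1) • (t0 n • vmon n (i, m)) := by
            rw [vmon, ← mul_assoc, comm_pow n i, add_mul, smul_mul_assoc, mul_assoc,
              ← pow_succ', vmon, vmon]
            congr 2
            rw [mul_assoc, ← Algebra.smul_def]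
          rw [this]
          exact add_mem (vmon_mem n _)
            (Submodule.smul_mem _ _ (Submodule.smul_mem _ _ (vmon_mem n _)))
  | zero => rw [mul_zero]; exact zero_mem _
  | add x y hx hy hx' hy' => rw [mul_add]; exact add_mem hx' hy'
  | smul a x hx hx' => rw [mul_smul_comm]; exact Submodule.smul_mem _ _ hx'

lemma mem_Tspan (r : Rring n) : r ∈ Tspan n := by
  obtain ⟨f, rfl⟩ := RingQuot.mkAlgHom_surjective (Bpoly n) (Rrel n) r
  have key : ∀ f : FreeAlgebra (Bpoly n) (Fin 2), ∀ s ∈ Tspan n,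
      RingQuot.mkAlgHom (Bpoly n) (Rrel n) f * s ∈ Tspan n := by
    intro f
    induction f using FreeAlgebra.induction with
    | grade0 b =>
        intro s hs
        rw [AlgHom.commutes, ← Algebra.smul_def]
        exact Submodule.smul_mem _ _ hs
    | grade1 i =>
        intro s hs
        fin_cases i
        · exact mul_x_mem n hs
        · exact mul_y_mem n hs
    | mul f g hf hg =>
        intro s hs
        rw [map_mul, mul_assoc]
        exact hf _ (hg s hs)
    | add f g hf hg =>
        intro s hs
        rw [map_add, add_mul]
        exact add_mem (hf s hs) (hg s hs)
  have h1 : (1 : Rring n) ∈ Tspan n := by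
    have : (1 : Rring n) = vmon n (0, 0) := by rw [vmon, pow_zero, pow_zero, one_mul]
    rw [this]; exact vmon_mem n _
  simpa using key f 1 h1

/-! ### Linear independence of polynomials of distinct degrees -/

lemma sum_smul_poly_eq_zero {ι : Type} (S : Finset ι) (q : ι → Apoly n) (c : ι → Bpoly n)
    (h0 : ∀ p ∈ S, q p ≠ 0)
    (hd : ∀ p ∈ S, ∀ p' ∈ S, (q p).natDegree = (q p').natDegree → p = p')
    (hs : ∑ p ∈ S, c p • q p = 0) : ∀ p ∈ S, c p = 0 := by
  by_contra hcon
  push_neg at hcon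
  obtain ⟨p1, hp1S, hp1⟩ := hcon
  have hT : (S.filter fun p => c p ≠ 0).Nonempty := ⟨p1, Finset.mem_filter.2 ⟨hp1S, hp1⟩⟩
  obtain ⟨ps, hpsT, hmax⟩ := Finset.exists_max_image _ (fun p => (q p).natDegree) hT
  obtain ⟨hpsS, hcps⟩ := Finset.mem_filter.1 hpsT
  have hco := congrArg (fun f => Polynomial.coeff f ((q ps).natDegree)) hs
  simp only [Polynomial.finset_sum_coeff, Polynomial.coeff_smul, Polynomial.coeff_zero] at hco
  rw [Finset.sum_eq_single_of_mem ps hpsS] at hco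
  · rw [Polynomial.coeff_natDegree, smul_eq_mul] at hco
    exact (mul_ne_zero hcps (Polynomial.leadingCoeff_ne_zero.2 (h0 ps hpsS))) hco
  · intro p hpS hne
    by_cases hc : c p = 0
    · rw [hc, zero_smul]
    · have hlt : (q p).natDegree < (q ps).natDegree := by
        have hle := hmax p (Finset.mem_filter.2 ⟨hpS, hc⟩)
        rcases lt_or_eq_of_le hle with h | h
        · exact h
        · exact absurd (hd p hpS ps hpsS h) hne
      rw [Polynomial.coeff_eq_zero_of_natDegree_lt hlt, smul_zero]

/-! ### The key injectivity criterion -/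

def Qpoly (a b : ℤ → Apoly n) (p : ℕ × ℕ) : Apoly n :=
  (∏ u ∈ Finset.range p.1, b ((p.2 : ℤ) - u)) * ∏ u ∈ Finset.range p.2, a u

lemma rep_inj (a b : ℤ → Apoly n) (δ : ℕ × ℕ → ℕ)
    (hQ0 : ∀ p, Qpoly n a b p ≠ 0)
    (hQdeg : ∀ p, (Qpoly n a b p).natDegree = δ p)
    (hδ : ∀ p p' : ℕ × ℕ, (p.2 : ℤ) - p.1 = (p'.2 : ℤ) - p'.1 → δ p = δ p' → p = p')
    (ρ : Rring n →ₐ[Bpoly n] Module.End (Bpoly n) (Mmod n))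
    (hx : ρ (Rx n) = shiftOp n a 1) (hy : ρ (Ry n) = shiftOp n b (-1)) :
    Function.Injective ρ := by
  rw [injective_iff_map_eq_zero]
  intro r hr
  obtain ⟨c, hc⟩ := Finsupp.mem_span_range_iff_exists_finsupp.1 (mem_Tspan n r)
  suffices hczero : c = 0 by
    rw [← hc, hczero, Finsupp.sum_zero_index]
  have hQeval : ∀ p : ℕ × ℕ,
      (shiftOp n b (-1) ^ p.1) ((shiftOp n a 1 ^ p.2) (Finsupp.single (0 : ℤ) (1 : Apoly n)))
        = Finsupp.single ((p.2 : ℤ) - p.1) (Qpoly n a b p) := by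
    intro p
    rw [opa_pow, opb_pow, Qpoly]
    congr 1
    · ring
    · rw [mul_one]
      congr 1
      · exact Finset.prod_congr rfl fun u _ => by congr 1; ring
      · exact Finset.prod_congr rfl fun u _ => by congr 1; ring
  have him : ∑ p ∈ c.support,
      c p • (Finsupp.single ((p.2 : ℤ) - p.1) (Qpoly n a b p) : Mmod n) = 0 := by
    have h2 : ρ r = ∑ p ∈ c.support, c p • (shiftOp n b (-1) ^ p.1 * shiftOp n a 1 ^ p.2) := by
      rw [← hc, Finsupp.sum, map_sum]
      exact Finset.sum_congr rfl fun p _ => by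
        rw [map_smul, vmon, map_mul, map_pow, map_pow, hx, hy]
    have h3 := congrArg (fun F : Module.End (Bpoly n) (Mmod n) =>
      F (Finsupp.single (0 : ℤ) (1 : Apoly n))) (h2.symm.trans hr)
    simpa only [LinearMap.sum_apply, LinearMap.smul_apply, Module.End.mul_apply, hQeval,
      LinearMap.zero_apply] using h3
  refine Finsupp.ext fun p0 => ?_
  show c p0 = 0
  by_contra hp0
  have hp0S : p0 ∈ c.support := Finsupp.mem_support_iff.2 hp0
  have hval := congrArg (fun v : Mmod n => v ((p0.2 : ℤ) - p0.1)) him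
  simp only [Finset.sum_apply', Finsupp.smul_apply, Finsupp.single_apply, Finsupp.coe_zero,
    Pi.zero_apply, smul_ite, smul_zero] at hval
  rw [Finset.sum_ite, Finset.sum_const_zero, add_zero] at hval
  have hfin := sum_smul_poly_eq_zero n _ (Qpoly n a b) (⇑c)
    (fun p _ => hQ0 p)
    (fun p hp p' hp' hdeg => by
      have hp2 := (Finset.mem_filter.1 hp).2
      have hp2' := (Finset.mem_filter.1 hp').2
      exact hδ p p' (hp2.trans hp2'.symm) (by rw [← hQdeg, ← hQdeg, hdeg]))
    hval p0
    (Finset.mem_filter.2 ⟨hp0S, rfl⟩)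
  exact hp0 hfin

end NCAux

open NCAux

theorem stmt2 (n : ℕ) (hn : 1 ≤ n)
    (φp : Rring n →ₐ[Bpoly n] R'ring n)
    (hpx : φp (Rx n) = R'x n) (hpy : φp (Ry n) = R'y n) :
    Function.Injective φp ∧
    ∀ j : ℕ, 1 ≤ j → j ≤ n →
      ∀ φm : Rring n →ₐ[Bpoly n] R'ring n,
        φm (Rx n) = R'x n ^ 2 * R'y n + R't n j * R'x n → φm (Ry n) = R'yinv n →
        Function.Injective φm := by
  constructor
  · -- φ⁺ is injective
    have hinj : Function.Injective ((Ψ n).comp φp) := by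
      apply rep_inj n (fun _ => 1) (bb n) (fun p => p.1)
      · intro p
        rw [Qpoly, Finset.prod_const_one, mul_one]
        exact Finset.prod_ne_zero_iff.2 fun u _ => bb_ne_zero n _
      · intro p
        rw [Qpoly, Finset.prod_const_one, mul_one,
          Polynomial.natDegree_prod _ _ (fun u _ => bb_ne_zero n _)]
        simp [bb_natDegree]
      · intro p p' h1 h2
        exact Prod.ext h2 (by omega)
      · rw [AlgHom.comp_apply, hpx, Ψ_x]; rfl
      · rw [AlgHom.comp_apply, hpy, Ψ_y]; rfl
    rw [AlgHom.coe_comp] at hinj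
    exact hinj.of_comp
  · -- the φ⁻ⱼ are injective
    intro j hj1 hjn φm hmx hmy
    set tj : Bpoly n := MvPolynomial.X (Fin.ofNat (n + 1) j) with htj
    set aj : ℤ → Apoly n :=
      fun k => Polynomial.C (-(t0 n)) * Polynomial.X
        + Polynomial.C (tj - t0 n * (k : Bpoly n)) with haj
    have haj_bb : ∀ k : ℤ, aj k = bb n k + Polynomial.C tj := by
      intro k
      rw [haj, bb, add_assoc, ← map_add]
      exact congrArg (fun q => Polynomial.C (-(t0 n)) * Polynomial.X + Polynomial.C q)
        (show tj - t0 n * (k : Bpoly n) = -(t0 n * (k : Bpoly n)) + tj by ring)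
    have haj_deg : ∀ k : ℤ, (aj k).natDegree = 1 := fun k =>
      Polynomial.natDegree_linear (neg_ne_zero.2 (t0_ne_zero n))
    have haj_ne : ∀ k : ℤ, aj k ≠ 0 := by
      intro k h
      have h1 := haj_deg k
      rw [h, Polynomial.natDegree_zero] at h1
      exact absurd h1 (by norm_num)
    have hop : Uop n ^ 2 * Nop n
        + algebraMap (Bpoly n) (Module.End (Bpoly n) (Mmod n)) tj * Uop n
        = shiftOp n aj 1 := by
      apply Finsupp.lhom_ext
      intro k p
      rw [LinearMap.add_apply, Module.End.mul_apply, Module.End.mul_apply, pow_two,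
        Module.End.mul_apply]
      rw [Uop, Nop, shiftOp_single, shiftOp_single, shiftOp_single, shiftOp_single,
        Module.algebraMap_end_apply, Finsupp.smul_single, shiftOp_single]
      have h1 : k + -1 + 1 + 1 = k + 1 := by ring
      rw [h1, ← Finsupp.single_add]
      congr 1
      rw [one_mul, one_mul, one_mul, Algebra.smul_def, Polynomial.algebraMap_eq,
        haj_bb, add_mul]
    have hinj : Function.Injective ((Ψ n).comp φm) := by
      apply rep_inj n aj (fun _ => 1) (fun p => p.2)
      · intro p
        rw [Qpoly, Finset.prod_const_one, one_mul]
        exact Finset.prod_ne_zero_iff.2 fun u _ => haj_ne _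
      · intro p
        rw [Qpoly, Finset.prod_const_one, one_mul,
          Polynomial.natDegree_prod _ _ (fun u _ => haj_ne _)]
        simp [haj_deg]
      · intro p p' h1 h2
        exact Prod.ext (by omega) h2
      · rw [AlgHom.comp_apply, hmx, map_add, map_mul, map_mul, map_pow, Ψ_x, Ψ_y, R't,
          AlgHom.commutes, hop]
      · rw [AlgHom.comp_apply, hmy, Ψ_yinv]; rfl
    rw [AlgHom.coe_comp] at hinj
    exact hinj.of_comp

end
end

section
/- The algebra 𝒮 is left Noetherian and right Noetherian. -/
namespace OreTools

variable {S : Type*} [Ring S]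

/-- Left `R`-span of `{x^i | i < d}`. -/
noncomputable def Gf (R : Subring S) (x : S) (d : ℕ) : Submodule ↥R S :=
  Submodule.span ↥R ((x ^ ·) '' Set.Iio d)

variable (R : Subring S) (x : S)

lemma smul_def (r : ↥R) (s : S) : r • s = (↑r : S) * s := rfl

lemma Gf_mono {d e : ℕ} (h : d ≤ e) : Gf R x d ≤ Gf R x e :=
  Submodule.span_mono (Set.image_mono (Set.Iio_subset_Iio h))

lemma xpow_mem_Gf {i d : ℕ} (h : i < d) : x ^ i ∈ Gf R x d :=
  Submodule.subset_span ⟨i, h, rfl⟩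

lemma one_mem_Gf {d : ℕ} (h : 0 < d) : (1 : S) ∈ Gf R x d := by
  simpa using xpow_mem_Gf R x h

lemma coe_mul_mem_Gf (r : ↥R) {s : S} {d : ℕ} (h : s ∈ Gf R x d) : (↑r : S) * s ∈ Gf R x d :=
  (Gf R x d).smul_mem r h

lemma mem_Gf_of_mem {y : S} (hy : y ∈ R) {d : ℕ} (h : 0 < d) : y ∈ Gf R x d := by
  have := coe_mul_mem_Gf R x ⟨y, hy⟩ (one_mem_Gf R x h)
  simpa using this

lemma Gf_zero : Gf R x 0 = ⊥ := by
  have h : ((x ^ ·) '' Set.Iio 0) = (∅ : Set S) := by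
    simp [Set.eq_empty_iff_forall_notMem]
  rw [Gf, h, Submodule.span_empty]

lemma Gf_mul_xpow {s : S} {d : ℕ} (hs : s ∈ Gf R x d) (e : ℕ) :
    s * x ^ e ∈ Gf R x (d + e) := by
  induction hs using Submodule.span_induction with
  | mem y hy =>
      obtain ⟨i, hi, rfl⟩ := hy
      rw [← pow_add]
      exact xpow_mem_Gf R x (by simp at hi; omega)
  | zero => simpa using (Gf R x (d+e)).zero_mem
  | add a b _ _ iha ihb => rw [add_mul]; exact add_mem iha ihb
  | smul a s _ ihs => rw [smul_def, mul_assoc]; exact coe_mul_mem_Gf R x a ihs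

section h1
variable (h1 : ∀ r : ↥R, ∃ a b : ↥R, x * (↑r : S) = ↑a * x + ↑b)
include h1

lemma xpow_mul_coe (r : ↥R) (i : ℕ) : x ^ i * (↑r : S) ∈ Gf R x (i + 1) := by
  induction i generalizing r with
  | zero => simpa using mem_Gf_of_mem R x r.2 (d := 1) Nat.one_pos
  | succ i ih =>
      obtain ⟨a, b, hab⟩ := h1 r
      have key : x ^ (i+1) * (↑r : S) = (x ^ i * ↑a) * x + x ^ i * ↑b := by
        rw [pow_succ, mul_assoc, hab]; noncomm_ring
      rw [key]
      refine add_mem ?_ ?_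
      · have := Gf_mul_xpow R x (ih a) 1
        simpa using this
      · exact Gf_mono R x (by omega) (ih b)

lemma Gf_mul_coe {s : S} {d : ℕ} (hs : s ∈ Gf R x d) (r : ↥R) :
    s * (↑r : S) ∈ Gf R x d := by
  induction hs using Submodule.span_induction with
  | mem y hy =>
      obtain ⟨i, hi, rfl⟩ := hy
      exact Gf_mono R x (by simp at hi; omega) (xpow_mul_coe R x h1 r i)
  | zero => simpa using (Gf R x d).zero_mem
  | add a b _ _ iha ihb => rw [add_mul]; exact add_mem iha ihb
  | smul a s _ ihs => rw [smul_def, mul_assoc]; exact coe_mul_mem_Gf R x a ihs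

lemma x_mul_Gf {s : S} {d : ℕ} (hs : s ∈ Gf R x d) : x * s ∈ Gf R x (d + 1) := by
  induction hs using Submodule.span_induction with
  | mem y hy =>
      obtain ⟨i, hi, rfl⟩ := hy
      rw [← pow_succ']
      exact xpow_mem_Gf R x (by simp at hi; omega)
  | zero => simpa using (Gf R x (d+1)).zero_mem
  | add a b _ _ iha ihb => rw [mul_add]; exact add_mem iha ihb
  | smul a s hs ihs =>
      obtain ⟨a1, b1, hab⟩ := h1 a
      have key : x * (a • s) = ↑a1 * (x * s) + ↑b1 * s := by
        rw [smul_def, ← mul_assoc, hab]; noncomm_ring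
      rw [key]
      exact add_mem (coe_mul_mem_Gf R x a1 ihs)
        (coe_mul_mem_Gf R x b1 (Gf_mono R x (by omega) hs))

lemma xpow_mul_Gf {s : S} {d : ℕ} (hs : s ∈ Gf R x d) (e : ℕ) :
    x ^ e * s ∈ Gf R x (d + e) := by
  induction e with
  | zero => simpa using hs
  | succ e ih =>
      have : x ^ (e+1) * s = x * (x ^ e * s) := by rw [pow_succ']; noncomm_ring
      rw [this, show d + (e+1) = (d + e) + 1 by omega]
      exact x_mul_Gf R x h1 ih

lemma Gf_mul_Gf {s t : S} {d e : ℕ} (hs : s ∈ Gf R x d) (ht : t ∈ Gf R x e) :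
    s * t ∈ Gf R x (d + e) := by
  induction hs using Submodule.span_induction with
  | mem y hy =>
      obtain ⟨i, hi, rfl⟩ := hy
      exact Gf_mono R x (by simp at hi; omega) (xpow_mul_Gf R x h1 ht i)
  | zero => simpa using (Gf R x (d+e)).zero_mem
  | add a b _ _ iha ihb => rw [add_mul]; exact add_mem iha ihb
  | smul a s _ ihs => rw [smul_def, mul_assoc]; exact coe_mul_mem_Gf R x a ihs

lemma It1 (r : ↥R) (d : ℕ) : ∃ a : ↥R, x ^ d * (↑r : S) - ↑a * x ^ d ∈ Gf R x d := by
  induction d with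
  | zero => exact ⟨r, by simpa using (Gf R x 0).zero_mem⟩
  | succ d ih =>
      obtain ⟨a, ha⟩ := ih
      obtain ⟨a1, b1, hab⟩ := h1 a
      refine ⟨a1, ?_⟩
      have key : x ^ (d+1) * (↑r : S) - ↑a1 * x ^ (d+1)
          = x * (x ^ d * ↑r - ↑a * x ^ d) + ↑b1 * x ^ d := by
        rw [pow_succ', mul_sub, ← mul_assoc x (↑a : S), hab]; noncomm_ring
      rw [key]
      exact add_mem (x_mul_Gf R x h1 ha)
        (coe_mul_mem_Gf R x b1 (xpow_mem_Gf R x (by omega)))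
end h1

lemma It2 (h1 : ∀ r : ↥R, ∃ a b : ↥R, x * (↑r : S) = ↑a * x + ↑b)
    (h2 : ∀ a : ↥R, ∃ r b : ↥R, x * (↑r : S) = ↑a * x + ↑b)
    (a : ↥R) (d : ℕ) : ∃ r : ↥R, x ^ d * (↑r : S) - ↑a * x ^ d ∈ Gf R x d := by
  induction d generalizing a with
  | zero => exact ⟨a, by simpa using (Gf R x 0).zero_mem⟩
  | succ d ih =>
      obtain ⟨b1, c1, hb1⟩ := h2 a
      obtain ⟨r, hr⟩ := ih b1
      refine ⟨r, ?_⟩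
      have key : x ^ (d+1) * (↑r : S) - ↑a * x ^ (d+1)
          = x * (x ^ d * ↑r - ↑b1 * x ^ d) + ↑c1 * x ^ d := by
        rw [pow_succ', mul_sub, ← mul_assoc x (↑b1 : S), hb1]; noncomm_ring
      rw [key]
      refine add_mem ?_ (coe_mul_mem_Gf R x c1 (xpow_mem_Gf R x (by omega)))
      exact x_mul_Gf R x h1 hr

lemma exists_leadCoeff {s : S} {d : ℕ} (hs : s ∈ Gf R x (d + 1)) :
    ∃ r : ↥R, s - ↑r * x ^ d ∈ Gf R x d := by
  induction hs using Submodule.span_induction with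
  | mem y hy =>
      obtain ⟨i, hi, rfl⟩ := hy
      simp only [Set.mem_Iio] at hi
      rcases Nat.lt_succ_iff_lt_or_eq.mp hi with h | rfl
      · exact ⟨0, by simpa using xpow_mem_Gf R x h⟩
      · exact ⟨1, by simpa using (Gf R x i).zero_mem⟩
  | zero => exact ⟨0, by simpa using (Gf R x d).zero_mem⟩
  | add a b _ _ iha ihb =>
      obtain ⟨r1, h1⟩ := iha; obtain ⟨r2, h2⟩ := ihb
      refine ⟨r1 + r2, ?_⟩
      have : a + b - ↑(r1 + r2) * x ^ d = (a - ↑r1 * x ^ d) + (b - ↑r2 * x ^ d) := by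
        push_cast; noncomm_ring
      rw [this]; exact add_mem h1 h2
  | smul c s _ ihs =>
      obtain ⟨r, h⟩ := ihs
      refine ⟨c * r, ?_⟩
      have : c • s - ↑(c * r) * x ^ d = ↑c * (s - ↑r * x ^ d) := by
        rw [smul_def]; push_cast; noncomm_ring
      rw [this]; exact coe_mul_mem_Gf R x c h


/-- Leading coefficient left ideal of `K` in degree `d`. -/
def Lset (K : Ideal S) (d : ℕ) : Ideal ↥R where
  carrier := {r : ↥R | ∃ f ∈ K, (↑r : S) * x ^ d - f ∈ Gf R x d}
  zero_mem' := ⟨0, K.zero_mem, by simpa using (Gf R x d).zero_mem⟩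
  add_mem' := by
    rintro r t ⟨f, hf, hrf⟩ ⟨f', hf', htf⟩
    refine ⟨f + f', K.add_mem hf hf', ?_⟩
    have : (↑(r + t) : S) * x ^ d - (f + f')
        = ((↑r : S) * x ^ d - f) + ((↑t : S) * x ^ d - f') := by
      push_cast; noncomm_ring
    rw [this]; exact add_mem hrf htf
  smul_mem' := by
    rintro c r ⟨f, hf, hrf⟩
    refine ⟨(↑c : S) * f, K.mul_mem_left _ hf, ?_⟩
    have : (↑(c • r) : S) * x ^ d - (↑c : S) * f = (↑c : S) * ((↑r : S) * x ^ d - f) := by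
      rw [smul_eq_mul]; push_cast; noncomm_ring
    rw [this]; exact coe_mul_mem_Gf R x c hrf

/-- The `σ⁻ᵈ`-shifted leading ideal. -/
def Mset (h1 : ∀ r : ↥R, ∃ a b : ↥R, x * (↑r : S) = ↑a * x + ↑b)
    (K : Ideal S) (d : ℕ) : Ideal ↥R where
  carrier := {b : ↥R | ∃ a ∈ Lset R x K d, x ^ d * (↑b : S) - ↑a * x ^ d ∈ Gf R x d}
  zero_mem' := ⟨0, (Lset R x K d).zero_mem, by simpa using (Gf R x d).zero_mem⟩
  add_mem' := by
    rintro r t ⟨a, ha, hra⟩ ⟨a', ha', hta⟩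
    refine ⟨a + a', (Lset R x K d).add_mem ha ha', ?_⟩
    have : x ^ d * (↑(r + t) : S) - (↑(a + a') : S) * x ^ d
        = (x ^ d * (↑r : S) - ↑a * x ^ d) + (x ^ d * (↑t : S) - ↑a' * x ^ d) := by
      push_cast; noncomm_ring
    rw [this]; exact add_mem hra hta
  smul_mem' := by
    rintro c b ⟨a, ha, hab⟩
    obtain ⟨c', hc'⟩ := It1 R x h1 c d
    refine ⟨c' * a, (Lset R x K d).mul_mem_left c' ha, ?_⟩
    have key : x ^ d * (↑(c • b) : S) - (↑(c' * a) : S) * x ^ d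
        = (x ^ d * (↑c : S) - ↑c' * x ^ d) * ↑b + (↑c' : S) * (x ^ d * (↑b : S) - ↑a * x ^ d) := by
      rw [smul_eq_mul]; push_cast; noncomm_ring
    rw [key]
    exact add_mem (Gf_mul_coe R x h1 hc' b) (coe_mul_mem_Gf R x c' hab)

lemma Mset_mono (h1 : ∀ r : ↥R, ∃ a b : ↥R, x * (↑r : S) = ↑a * x + ↑b)
    (K : Ideal S) (d : ℕ) : Mset R x h1 K d ≤ Mset R x h1 K (d + 1) := by
  rintro b ⟨a, ⟨f, hfK, hf⟩, hab⟩
  obtain ⟨a1, c1, h⟩ := h1 a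
  have ha1 : a1 ∈ Lset R x K (d + 1) := by
    refine ⟨x * f, K.mul_mem_left x hfK, ?_⟩
    have key : (↑a1 : S) * x ^ (d+1) - x * f
        = x * ((↑a : S) * x ^ d - f) - (↑c1 : S) * x ^ d := by
      rw [pow_succ', mul_sub, ← mul_assoc x (↑a : S), h]; noncomm_ring
    rw [key]
    exact sub_mem (x_mul_Gf R x h1 hf) (coe_mul_mem_Gf R x c1 (xpow_mem_Gf R x (by omega)))
  refine ⟨a1, ha1, ?_⟩
  have key : x ^ (d+1) * (↑b : S) - (↑a1 : S) * x ^ (d+1)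
      = x * (x ^ d * (↑b : S) - ↑a * x ^ d) + (↑c1 : S) * x ^ d := by
    rw [pow_succ', mul_sub, ← mul_assoc x (↑a : S), h]; noncomm_ring
  rw [key]
  exact add_mem (x_mul_Gf R x h1 hab) (coe_mul_mem_Gf R x c1 (xpow_mem_Gf R x (by omega)))

/-- Hilbert basis theorem for an abstract Ore-type extension. -/
theorem core (h1 : ∀ r : ↥R, ∃ a b : ↥R, x * (↑r : S) = ↑a * x + ↑b)
    (h2 : ∀ a : ↥R, ∃ r b : ↥R, x * (↑r : S) = ↑a * x + ↑b)
    (h3 : ∀ s : S, ∃ d, s ∈ Gf R x d)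
    (hR : IsNoetherianRing ↥R) : IsNoetherianRing S := by
  rw [isNoetherianRing_iff_ideal_fg]
  intro I
  haveI := hR
  obtain ⟨N, hN⟩ := monotone_stabilizes_iff_noetherian.mpr hR
    ⟨fun d => Mset R x h1 I d, monotone_nat_of_le_succ (fun d => Mset_mono R x h1 I d)⟩
  have hLfg : ∀ k, (Lset R x I k).FG := fun k => IsNoetherian.noetherian _
  choose T hT using hLfg
  have hwit0 : ∀ (k : ℕ) (r : ↥R), ∃ f : S, r ∈ Lset R x I k →
      (f ∈ I ∧ (↑r : S) * x ^ k - f ∈ Gf R x k) := by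
    intro k r
    by_cases h : r ∈ Lset R x I k
    · obtain ⟨f, hf1, hf2⟩ := h
      exact ⟨f, fun _ => ⟨hf1, hf2⟩⟩
    · exact ⟨0, fun h' => absurd h' h⟩
  choose wit hwit using hwit0
  set W : Set S := ⋃ k ∈ Finset.range (N+1), wit k '' (T k : Set ↥R) with hW
  have hWfin : W.Finite :=
    Set.Finite.biUnion (Finset.range (N+1)).finite_toSet
      (fun k _ => ((T k).finite_toSet.image _))
  set J : Ideal S := Ideal.span W with hJ
  have hTL : ∀ k, ∀ r ∈ T k, r ∈ Lset R x I k := by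
    intro k r hr
    rw [← hT k]; exact Ideal.subset_span hr
  have hJI : J ≤ I := by
    rw [hJ, Ideal.span_le]
    rintro f hf
    simp only [hW, Set.mem_iUnion] at hf
    obtain ⟨k, hk, r, hr, rfl⟩ := hf
    exact (hwit k r (hTL k r hr)).1
  have hstar : ∀ k ≤ N, ∀ a ∈ Lset R x I k, ∃ f ∈ J, (↑a : S) * x ^ k - f ∈ Gf R x k := by
    intro k hk
    have hle : Lset R x I k ≤ Lset R x J k := by
      rw [← hT k, Ideal.span_le]
      intro r hr
      refine ⟨wit k r, Ideal.subset_span ?_, (hwit k r (hTL k r hr)).2⟩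
      simp only [hW, Set.mem_iUnion]
      exact ⟨k, Finset.mem_range.mpr (by omega), r, hr, rfl⟩
    exact fun a ha => hle ha
  have hred : ∀ d (f : S), f ∈ I → f ∈ Gf R x (d+1) →
      ∃ h ∈ J, f - h ∈ I ∧ f - h ∈ Gf R x d := by
    intro d f hfI hfG
    obtain ⟨r, hr⟩ := exists_leadCoeff R x hfG
    have hrL : r ∈ Lset R x I d := ⟨f, hfI, by
      have : (↑r : S) * x ^ d - f = -(f - ↑r * x ^ d) := by noncomm_ring
      rw [this]; exact neg_mem hr⟩
    by_cases hd : d ≤ N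
    · obtain ⟨f', hf'J, hf'⟩ := hstar d hd r hrL
      refine ⟨f', hf'J, sub_mem hfI (hJI hf'J), ?_⟩
      have : f - f' = (f - (↑r : S) * x ^ d) + ((↑r : S) * x ^ d - f') := by noncomm_ring
      rw [this]; exact add_mem hr hf'
    · push_neg at hd
      obtain ⟨e, rfl⟩ : ∃ e, d = N + e := ⟨d - N, by omega⟩
      obtain ⟨b, hb⟩ := It2 R x h1 h2 r (N+e)
      have hbM : b ∈ Mset R x h1 I (N+e) := ⟨r, hrL, hb⟩
      have hbN : b ∈ Mset R x h1 I N := by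
        have heq : Mset R x h1 I N = Mset R x h1 I (N+e) := hN (N+e) (by omega)
        rw [heq]; exact hbM
      obtain ⟨a', ha'L, ha'b⟩ := hbN
      obtain ⟨f', hf'J, hf'⟩ := hstar N le_rfl a' ha'L
      refine ⟨x ^ e * f', Ideal.mul_mem_left _ _ hf'J,
        sub_mem hfI (hJI (Ideal.mul_mem_left _ _ hf'J)), ?_⟩
      have m3 : x ^ e * (x ^ N * (↑b : S) - ↑a' * x ^ N) ∈ Gf R x (N+e) :=
        xpow_mul_Gf R x h1 ha'b e
      have m4 : x ^ e * ((↑a' : S) * x ^ N - f') ∈ Gf R x (N+e) :=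
        xpow_mul_Gf R x h1 hf' e
      have key : f - x ^ e * f' = (f - (↑r : S) * x ^ (N+e))
          - (x ^ (N+e) * (↑b : S) - ↑r * x ^ (N+e))
          + x ^ e * (x ^ N * (↑b : S) - ↑a' * x ^ N)
          + x ^ e * ((↑a' : S) * x ^ N - f') := by
        have hp : x ^ (N+e) = x ^ e * x ^ N := by rw [← pow_add, add_comm]
        rw [hp]; noncomm_ring
      rw [key]
      exact add_mem (add_mem (sub_mem hr hb) m3) m4
  have hdesc : ∀ d (f : S), f ∈ I → f ∈ Gf R x d → f ∈ J := by
    intro d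
    induction d with
    | zero =>
        intro f _ hfG
        rw [Gf_zero] at hfG
        have : f = 0 := by simpa using hfG
        rw [this]; exact J.zero_mem
    | succ d ih =>
        intro f hfI hfG
        obtain ⟨h, hhJ, hfhI, hfhG⟩ := hred d f hfI hfG
        have hfh := ih _ hfhI hfhG
        have : f = (f - h) + h := by noncomm_ring
        rw [this]; exact J.add_mem hfh hhJ
  have hIJ : I = J := by
    refine le_antisymm (fun f hf => ?_) hJI
    obtain ⟨d, hd⟩ := h3 f
    exact hdesc d f hf hd
  rw [hIJ, hJ]
  exact ⟨hWfin.toFinset, by rw [Set.Finite.coe_toFinset]⟩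


open MulOpposite in
lemma op_mem_Gf (h1' : ∀ r : ↥(R.op), ∃ a b : ↥(R.op),
      (op x) * (↑r : Sᵐᵒᵖ) = ↑a * (op x) + ↑b)
    {s : S} {d : ℕ} (hs : s ∈ Gf R x d) : op s ∈ Gf R.op (op x) d := by
  induction hs using Submodule.span_induction with
  | mem y hy =>
      obtain ⟨i, hi, rfl⟩ := hy
      show op (x ^ i) ∈ _
      rw [MulOpposite.op_pow]
      exact xpow_mem_Gf R.op (op x) (by simpa using hi)
  | zero => simpa using (Gf R.op (op x) d).zero_mem
  | add a b _ _ iha ihb => rw [op_add]; exact add_mem iha ihb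
  | smul a s _ ihs =>
      have : op ((↑a : S) * s) = op s * (↑(⟨op (↑a : S), Subring.mem_op.mpr a.2⟩ : ↥(R.op)) : Sᵐᵒᵖ) := rfl
      rw [smul_def, this]
      exact Gf_mul_coe R.op (op x) h1' ihs _

open MulOpposite in
/-- Opposite-side Hilbert basis theorem. -/
theorem coreOp (h1 : ∀ r : ↥R, ∃ a b : ↥R, x * (↑r : S) = ↑a * x + ↑b)
    (h2 : ∀ a : ↥R, ∃ r b : ↥R, x * (↑r : S) = ↑a * x + ↑b)
    (h3 : ∀ s : S, ∃ d, s ∈ Gf R x d)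
    (hRop : IsNoetherianRing (↥R)ᵐᵒᵖ) : IsNoetherianRing Sᵐᵒᵖ := by
  have e : (↥R)ᵐᵒᵖ ≃+* ↥(R.op) :=
    { toFun := fun a => ⟨op (↑(unop a) : S), Subring.mem_op.mpr (unop a).2⟩
      invFun := fun b => op ⟨unop (↑b : Sᵐᵒᵖ), b.2⟩
      left_inv := fun a => rfl
      right_inv := fun b => rfl
      map_mul' := fun a b => rfl
      map_add' := fun a b => rfl }
  have hR' : IsNoetherianRing ↥(R.op) := isNoetherianRing_of_ringEquiv _ e
  have h1' : ∀ r : ↥(R.op), ∃ a b : ↥(R.op),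
      (op x) * (↑r : Sᵐᵒᵖ) = ↑a * (op x) + ↑b := by
    intro r
    obtain ⟨p, c, hp⟩ := h2 ⟨unop (↑r : Sᵐᵒᵖ), r.2⟩
    refine ⟨⟨op (↑p : S), Subring.mem_op.mpr p.2⟩, ⟨op (-(↑c : S)), Subring.mem_op.mpr (R.neg_mem c.2)⟩, ?_⟩
    apply unop_injective
    simp only [unop_mul, unop_add, unop_op]
    have : unop (↑r : Sᵐᵒᵖ) * x = x * (↑p : S) + (-(↑c : S)) := by
      rw [hp]; simp
    simpa using this
  have h2' : ∀ a : ↥(R.op), ∃ r b : ↥(R.op),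
      (op x) * (↑r : Sᵐᵒᵖ) = ↑a * (op x) + ↑b := by
    intro a
    obtain ⟨a1, c1, hp⟩ := h1 ⟨unop (↑a : Sᵐᵒᵖ), a.2⟩
    refine ⟨⟨op (↑a1 : S), Subring.mem_op.mpr a1.2⟩, ⟨op (-(↑c1 : S)), Subring.mem_op.mpr (R.neg_mem c1.2)⟩, ?_⟩
    apply unop_injective
    simp only [unop_mul, unop_add, unop_op]
    have : (↑a1 : S) * x = x * unop (↑a : Sᵐᵒᵖ) + (-(↑c1 : S)) := by
      rw [hp]; simp
    simpa using this
  have h3' : ∀ s : Sᵐᵒᵖ, ∃ d, s ∈ Gf R.op (op x) d := by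
    intro s
    obtain ⟨d, hd⟩ := h3 (unop s)
    exact ⟨d, by simpa using op_mem_Gf R x h1' hd⟩
  exact core R.op (op x) h1' h2' h3' hR'

/-- Verify `h1`-type hypotheses on ring generators. -/
lemma h1_of_closure (gens : Set S) (hRc : R ≤ Subring.closure gens)
    (hcR : Subring.closure gens ≤ R)
    (hg : ∀ y ∈ gens, ∃ a ∈ R, ∃ b ∈ R, x * y = a * x + b) :
    ∀ r : ↥R, ∃ a b : ↥R, x * (↑r : S) = ↑a * x + ↑b := by
  have main : ∀ y (hy : y ∈ Subring.closure gens), ∃ a ∈ R, ∃ b ∈ R, x * y = a * x + b := by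
    intro y hy
    induction hy using Subring.closure_induction with
    | mem y hy => exact hg y hy
    | zero => exact ⟨0, R.zero_mem, 0, R.zero_mem, by simp⟩
    | one => exact ⟨1, R.one_mem, 0, R.zero_mem, by simp⟩
    | add y z hy hz ihy ihz =>
        obtain ⟨a, ha, b, hb, hab⟩ := ihy
        obtain ⟨a', ha', b', hb', hab'⟩ := ihz
        exact ⟨a + a', R.add_mem ha ha', b + b', R.add_mem hb hb',
          by rw [mul_add, hab, hab']; noncomm_ring⟩
    | neg y hy ihy =>
        obtain ⟨a, ha, b, hb, hab⟩ := ihy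
        exact ⟨-a, R.neg_mem ha, -b, R.neg_mem hb, by rw [mul_neg, hab]; noncomm_ring⟩
    | mul y z hy hz ihy ihz =>
        obtain ⟨a, ha, b, hb, hab⟩ := ihy
        obtain ⟨a', ha', b', hb', hab'⟩ := ihz
        refine ⟨a * a', R.mul_mem ha ha', a * b' + b * z, R.add_mem (R.mul_mem ha hb')
          (R.mul_mem hb (hcR hz)), ?_⟩
        rw [← mul_assoc, hab, add_mul, mul_assoc a x z, hab']; noncomm_ring
  intro r
  obtain ⟨a, ha, b, hb, hab⟩ := main (↑r : S) (hRc r.2)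
  exact ⟨⟨a, ha⟩, ⟨b, hb⟩, hab⟩

/-- Verify `h2`-type hypotheses on ring generators. -/
lemma h2_of_closure (gens : Set S) (hRc : R ≤ Subring.closure gens)
    (hcR : Subring.closure gens ≤ R)
    (hg : ∀ y ∈ gens, ∃ p ∈ R, ∃ b ∈ R, x * p = y * x + b) :
    ∀ a : ↥R, ∃ r b : ↥R, x * (↑r : S) = ↑a * x + ↑b := by
  have main : ∀ y (hy : y ∈ Subring.closure gens), ∃ p ∈ R, ∃ b ∈ R, x * p = y * x + b := by
    intro y hy
    induction hy using Subring.closure_induction with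
    | mem y hy => exact hg y hy
    | zero => exact ⟨0, R.zero_mem, 0, R.zero_mem, by simp⟩
    | one => exact ⟨1, R.one_mem, 0, R.zero_mem, by simp⟩
    | add y z hy hz ihy ihz =>
        obtain ⟨p, hp, b, hb, hpb⟩ := ihy
        obtain ⟨p', hp', b', hb', hpb'⟩ := ihz
        exact ⟨p + p', R.add_mem hp hp', b + b', R.add_mem hb hb',
          by rw [mul_add, hpb, hpb']; noncomm_ring⟩
    | neg y hy ihy =>
        obtain ⟨p, hp, b, hb, hpb⟩ := ihy
        exact ⟨-p, R.neg_mem hp, -b, R.neg_mem hb, by rw [mul_neg, hpb]; noncomm_ring⟩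
    | mul y z hy hz ihy ihz =>
        obtain ⟨p, hp, b, hb, hpb⟩ := ihy
        obtain ⟨p', hp', b', hb', hpb'⟩ := ihz
        refine ⟨p * p', R.mul_mem hp hp', y * b' + b * p',
          R.add_mem (R.mul_mem (hcR hy) hb') (R.mul_mem hb hp'), ?_⟩
        rw [← mul_assoc, hpb, add_mul, mul_assoc y x p', hpb']; noncomm_ring
  intro a
  obtain ⟨p, hp, b, hb, hpb⟩ := main (↑a : S) (hRc a.2)
  exact ⟨⟨p, hp⟩, ⟨b, hb⟩, hpb⟩

/-- Verify the exhaustion hypothesis on ring generators. -/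
lemma h3_of_closure (h1 : ∀ r : ↥R, ∃ a b : ↥R, x * (↑r : S) = ↑a * x + ↑b)
    (gens : Set S) (htop : ∀ s : S, s ∈ Subring.closure gens)
    (hg : ∀ y ∈ gens, ∃ d, y ∈ Gf R x d) :
    ∀ s : S, ∃ d, s ∈ Gf R x d := by
  intro s
  induction htop s using Subring.closure_induction with
  | mem y hy => exact hg y hy
  | zero => exact ⟨0, (Gf R x 0).zero_mem⟩
  | one => exact ⟨1, one_mem_Gf R x Nat.one_pos⟩
  | add y z hy hz ihy ihz =>
      obtain ⟨d, hd⟩ := ihy; obtain ⟨e, he⟩ := ihz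
      exact ⟨max d e, add_mem (Gf_mono R x (le_max_left d e) hd)
        (Gf_mono R x (le_max_right d e) he)⟩
  | neg y hy ihy =>
      obtain ⟨d, hd⟩ := ihy
      exact ⟨d, neg_mem hd⟩
  | mul y z hy hz ihy ihz =>
      obtain ⟨d, hd⟩ := ihy; obtain ⟨e, he⟩ := ihz
      exact ⟨d + e, Gf_mul_Gf R x h1 hd he⟩

/-- Elements of a subring realized as a closure lie in the closure of the lifted generators. -/
lemma closure_subtype (B : Subring S) (gens : Set S) (hB : Subring.closure gens = B) :
    ∀ s : ↥B, s ∈ Subring.closure (B.subtype ⁻¹' gens) := by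
  intro s
  have hle : Subring.closure gens ≤ (Subring.closure (B.subtype ⁻¹' gens)).map B.subtype := by
    apply Subring.closure_le.mpr
    intro y hy
    have hyB : y ∈ B := hB ▸ Subring.subset_closure hy
    exact ⟨⟨y, hyB⟩, Subring.subset_closure (show B.subtype ⟨y, hyB⟩ ∈ gens from hy), rfl⟩
  have hs : (↑s : S) ∈ Subring.closure gens := hB ▸ s.2
  obtain ⟨t, ht, hts⟩ := hle hs
  have : t = s := Subtype.ext hts
  exact this ▸ ht

end OreTools



/-!
Context: `C = ℂ[s₀,…,sₙ]`, `𝒮 = C⟨u,v,g⟩/(g^{n+1} − 1, gu − ζug, gv − ζ⁻¹vg,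
uv − vu − Σᵢ sᵢgⁱ)`, `ζ = e^{2πi/(n+1)}`.
Statement 8: the algebra `𝒮` is left Noetherian and right Noetherian.
-/

noncomputable section

/-- The polynomial base ring `C = ℂ[s₀,…,sₙ]`. -/
abbrev Cpoly (n : ℕ) : Type := MvPolynomial (Fin (n + 1)) ℂ

/-- `ζ = e^{2πi/(n+1)}`. -/
def zeta (n : ℕ) : ℂ := Complex.exp (2 * Real.pi * Complex.I / (n + 1))

/-- The defining relations of `𝒮 = C⟨u,v,g⟩/(g^{n+1} − 1, gu − ζug, gv − ζ⁻¹vg,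
uv − vu − Σᵢ sᵢ gⁱ)`, with `u = ι 0`, `v = ι 1`, `g = ι 2`. -/
inductive Srel (n : ℕ) : FreeAlgebra (Cpoly n) (Fin 3) → FreeAlgebra (Cpoly n) (Fin 3) → Prop
  | gpow : Srel n (FreeAlgebra.ι (Cpoly n) 2 ^ (n + 1)) 1
  | gu : Srel n (FreeAlgebra.ι (Cpoly n) 2 * FreeAlgebra.ι (Cpoly n) 0)
      (algebraMap (Cpoly n) (FreeAlgebra (Cpoly n) (Fin 3)) (MvPolynomial.C (zeta n)) *
        (FreeAlgebra.ι (Cpoly n) 0 * FreeAlgebra.ι (Cpoly n) 2))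
  | gv : Srel n (FreeAlgebra.ι (Cpoly n) 2 * FreeAlgebra.ι (Cpoly n) 1)
      (algebraMap (Cpoly n) (FreeAlgebra (Cpoly n) (Fin 3)) (MvPolynomial.C (zeta n)⁻¹) *
        (FreeAlgebra.ι (Cpoly n) 1 * FreeAlgebra.ι (Cpoly n) 2))
  | uv : Srel n (FreeAlgebra.ι (Cpoly n) 0 * FreeAlgebra.ι (Cpoly n) 1)
      (FreeAlgebra.ι (Cpoly n) 1 * FreeAlgebra.ι (Cpoly n) 0 +
        ∑ i ∈ Finset.range (n + 1),
          algebraMap (Cpoly n) (FreeAlgebra (Cpoly n) (Fin 3))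
            (MvPolynomial.X (Fin.ofNat (n + 1) i)) * FreeAlgebra.ι (Cpoly n) 2 ^ i)

/-- The semi-universal noncommutative deformation
`𝒮 = C⟨u,v⟩#G/(uv − vu − Σ sᵢgⁱ)` of the twisted group algebra `S = ℂ[u,v]#G`. -/
abbrev Salg (n : ℕ) : Type := RingQuot (Srel n)

/-- `u ∈ 𝒮`. -/
def Su (n : ℕ) : Salg n := RingQuot.mkAlgHom (Cpoly n) (Srel n) (FreeAlgebra.ι (Cpoly n) 0)

/-- `v ∈ 𝒮`. -/
def Sv (n : ℕ) : Salg n := RingQuot.mkAlgHom (Cpoly n) (Srel n) (FreeAlgebra.ι (Cpoly n) 1)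

/-- `g ∈ 𝒮`. -/
def Sg (n : ℕ) : Salg n := RingQuot.mkAlgHom (Cpoly n) (Srel n) (FreeAlgebra.ι (Cpoly n) 2)

/-- The idempotent `eᵢ = (1/(n+1)) Σ_{j=0}^n ζ^{ij} g^j ∈ 𝒮` (the index `i` being read
modulo `n+1`, as `eᵢ` only depends on `i mod (n+1)` since `ζ^{n+1} = 1`). -/
def Se (n : ℕ) (i : ℕ) : Salg n :=
  algebraMap (Cpoly n) (Salg n) (MvPolynomial.C ((n + 1 : ℂ)⁻¹)) *
    ∑ j ∈ Finset.range (n + 1),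
      algebraMap (Cpoly n) (Salg n) (MvPolynomial.C (zeta n ^ (i * j))) * Sg n ^ j


set_option synthInstance.maxHeartbeats 1000000
set_option maxHeartbeats 1600000

namespace Stmt8
open OreTools

variable (n : ℕ)

lemma zeta_ne_zero : zeta n ≠ 0 := Complex.exp_ne_zero _

/-- scalar constants in `Salg`. -/
abbrev aC (a : ℂ) : Salg n := algebraMap (Cpoly n) (Salg n) (MvPolynomial.C a)

lemma aC_mul (a b : ℂ) : aC n a * aC n b = aC n (a * b) := by
  rw [← map_mul, ← map_mul]

lemma aC_zeta_inv_mul : aC n (zeta n)⁻¹ * aC n (zeta n) = 1 := by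
  rw [aC_mul, inv_mul_cancel₀ (zeta_ne_zero n)]
  show algebraMap (Cpoly n) (Salg n) (MvPolynomial.C (1:ℂ)) = 1
  simp

lemma aC_zeta_mul_inv : aC n (zeta n) * aC n (zeta n)⁻¹ = 1 := by
  rw [aC_mul, mul_inv_cancel₀ (zeta_ne_zero n)]
  show algebraMap (Cpoly n) (Salg n) (MvPolynomial.C (1:ℂ)) = 1
  simp

lemma Sgu : Sg n * Su n = aC n (zeta n) * (Su n * Sg n) := by
  have h := RingQuot.mkAlgHom_rel (Cpoly n) (Srel.gu (n := n))
  simpa only [Su, Sg, map_mul, AlgHom.commutes] using h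

lemma Sgv : Sg n * Sv n = aC n (zeta n)⁻¹ * (Sv n * Sg n) := by
  have h := RingQuot.mkAlgHom_rel (Cpoly n) (Srel.gv (n := n))
  simpa only [Sv, Sg, map_mul, AlgHom.commutes] using h

/-- The element `Σᵢ sᵢ gⁱ`. -/
def Eelt : Salg n := ∑ i ∈ Finset.range (n + 1),
  algebraMap (Cpoly n) (Salg n) (MvPolynomial.X (Fin.ofNat (n + 1) i)) * Sg n ^ i

lemma Suv : Su n * Sv n = Sv n * Su n + Eelt n := by
  have h := RingQuot.mkAlgHom_rel (Cpoly n) (Srel.uv (n := n))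
  simpa only [Su, Sv, Sg, Eelt, map_mul, map_add, map_sum, map_pow, AlgHom.commutes] using h

lemma Svu : Sv n * Su n = Su n * Sv n + -Eelt n := by
  rw [Suv n]; abel

lemma central_pull (p : Cpoly n) (s t : Salg n) :
    s * (algebraMap (Cpoly n) (Salg n) p * t) = algebraMap (Cpoly n) (Salg n) p * (s * t) := by
  rw [← mul_assoc, (Algebra.commutes p s).symm, mul_assoc]

lemma Sug : Su n * Sg n = (aC n (zeta n)⁻¹ * Sg n) * Su n := by
  have key : aC n (zeta n)⁻¹ * (Sg n * Su n) = Su n * Sg n := by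
    rw [Sgu n, ← mul_assoc, aC_zeta_inv_mul n, one_mul]
  rw [← key, mul_assoc]

lemma Svg : Sv n * Sg n = (aC n (zeta n) * Sg n) * Sv n := by
  have key : aC n (zeta n) * (Sg n * Sv n) = Sv n * Sg n := by
    rw [Sgv n, ← mul_assoc, aC_zeta_mul_inv n, one_mul]
  rw [← key, mul_assoc]

lemma Sug' : Su n * (aC n (zeta n) * Sg n) = Sg n * Su n := by
  rw [central_pull, Sug n, ← mul_assoc, ← mul_assoc, aC_zeta_mul_inv n, one_mul]

lemma Svg' : Sv n * (aC n (zeta n)⁻¹ * Sg n) = Sg n * Sv n := by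
  rw [central_pull, Svg n, ← mul_assoc, ← mul_assoc, aC_zeta_inv_mul n, one_mul]

/-- Generators of the subalgebra `B₂` generated by `C`, `g`, `u`. -/
def gensB2 : Set (Salg n) := Set.range (algebraMap (Cpoly n) (Salg n)) ∪ {Sg n, Su n}

/-- The subring generated by `C`, `g`, `u`. -/
def B2 : Subring (Salg n) := Subring.closure (gensB2 n)

lemma Sg_mem_B2 : Sg n ∈ B2 n := Subring.subset_closure (by simp [gensB2])
lemma Su_mem_B2 : Su n ∈ B2 n := Subring.subset_closure (by simp [gensB2])
lemma algebraMap_mem_B2 (p : Cpoly n) : algebraMap (Cpoly n) (Salg n) p ∈ B2 n :=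
  Subring.subset_closure (Or.inl ⟨p, rfl⟩)

lemma Eelt_mem_B2 : Eelt n ∈ B2 n := by
  refine Subring.sum_mem _ (fun i _ => ?_)
  exact (B2 n).mul_mem (algebraMap_mem_B2 n _) (Subring.pow_mem _ (Sg_mem_B2 n) i)

/-- Evaluation of polynomials at `g`. -/
def rho : Polynomial (Cpoly n) →ₐ[Cpoly n] Salg n := Polynomial.aeval (Sg n)

lemma rho_mem_B2 : ∀ p, rho n p ∈ B2 n := by
  intro p
  refine Polynomial.induction_on p (fun a => ?_) (fun p q hp hq => ?_) (fun k a ih => ?_)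
  · simpa [rho] using algebraMap_mem_B2 n a
  · rw [map_add]; exact (B2 n).add_mem hp hq
  · have heq : (Polynomial.C a * Polynomial.X ^ (k+1) : Polynomial (Cpoly n))
        = (Polynomial.C a * Polynomial.X ^ k) * Polynomial.X := by ring
    rw [heq, map_mul]
    exact (B2 n).mul_mem ih (by simpa [rho] using Sg_mem_B2 n)

/-- `rho` corestricted to `B₂`. -/
def rho' : Polynomial (Cpoly n) →+* ↥(B2 n) :=
  (rho n).toRingHom.codRestrict (B2 n) (rho_mem_B2 n)

lemma rho'_coe (p : Polynomial (Cpoly n)) : (↑(rho' n p) : Salg n) = rho n p := rfl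

/-- The coefficient subring `R₂ ⊆ B₂` generated by `C` and `g`. -/
def R2 : Subring ↥(B2 n) := (rho' n).range

lemma hR2 : IsNoetherianRing ↥(R2 n) :=
  isNoetherianRing_of_surjective _ _ (rho' n).rangeRestrict (rho' n).rangeRestrict_surjective

lemma surj_op {A B : Type*} [Ring A] [Ring B] (f : A →+* B) (h : Function.Surjective f) :
    Function.Surjective (RingHom.op f) := by
  intro y
  obtain ⟨a, ha⟩ := h y.unop
  exact ⟨MulOpposite.op a, MulOpposite.unop_injective (by simpa using ha)⟩

lemma hR2op : IsNoetherianRing (↥(R2 n))ᵐᵒᵖ := by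
  haveI : IsNoetherianRing (Polynomial (Cpoly n))ᵐᵒᵖ :=
    isNoetherianRing_of_ringEquiv _ (RingEquiv.toOpposite _)
  exact isNoetherianRing_of_surjective _ _ (RingHom.op (rho' n).rangeRestrict)
    (surj_op _ (rho' n).rangeRestrict_surjective)

/-- The generators of `R₂` inside `B₂`. -/
def gens2 : Set ↥(B2 n) :=
  (B2 n).subtype ⁻¹' (Set.range (algebraMap (Cpoly n) (Salg n)) ∪ {Sg n})

lemma closure_gens2 : Subring.closure (gens2 n) = R2 n := by
  apply le_antisymm
  · apply Subring.closure_le.mpr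
    rintro t (⟨p, hp⟩ | ht)
    · exact RingHom.mem_range.mpr ⟨Polynomial.C p,
        Subtype.ext (by rw [rho'_coe]; simpa [rho] using hp)⟩
    · exact RingHom.mem_range.mpr ⟨Polynomial.X,
        Subtype.ext (by rw [rho'_coe]; simpa [rho] using ht.symm)⟩
  · rintro _ ⟨p, rfl⟩
    refine Polynomial.induction_on p (fun a => ?_) (fun p q hp hq => ?_) (fun k a ih => ?_)
    · refine Subring.subset_closure (Or.inl ⟨a, ?_⟩)
      show algebraMap (Cpoly n) (Salg n) a = ((B2 n).subtype (rho' n (Polynomial.C a)))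
      simp [rho'_coe, rho]
    · rw [map_add]; exact add_mem hp hq
    · have heq : (Polynomial.C a * Polynomial.X ^ (k+1) : Polynomial (Cpoly n))
          = (Polynomial.C a * Polynomial.X ^ k) * Polynomial.X := by ring
      rw [heq, map_mul]
      refine mul_mem ih (Subring.subset_closure (Or.inr ?_))
      show ((B2 n).subtype (rho' n Polynomial.X)) ∈ _
      simp [rho'_coe, rho]


/-- `u` as an element of `B₂`. -/
def uB : ↥(B2 n) := ⟨Su n, Su_mem_B2 n⟩

lemma mem_R2_of_algebraMap (y : ↥(B2 n)) (p : Cpoly n)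
    (hp : algebraMap (Cpoly n) (Salg n) p = ↑y) : y ∈ R2 n :=
  RingHom.mem_range.mpr ⟨Polynomial.C p, Subtype.ext (by rw [rho'_coe]; simpa [rho] using hp)⟩

lemma mem_R2_of_Sg (y : ↥(B2 n)) (hy : (↑y : Salg n) = Sg n) : y ∈ R2 n :=
  RingHom.mem_range.mpr ⟨Polynomial.X, Subtype.ext (by rw [rho'_coe]; simpa [rho] using hy.symm)⟩

lemma coe_rho'_CX (c : ℂ) :
    (↑(rho' n (Polynomial.C (MvPolynomial.C c) * Polynomial.X)) : Salg n) = aC n c * Sg n := by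
  rw [rho'_coe]; simp [rho]

lemma h1B2 : ∀ r : ↥(R2 n), ∃ a b : ↥(R2 n),
    uB n * (↑r : ↥(B2 n)) = ↑a * uB n + ↑b := by
  refine h1_of_closure (R2 n) (uB n) (gens2 n) (closure_gens2 n).ge (closure_gens2 n).le ?_
  rintro y (⟨p, hp⟩ | hy)
  · refine ⟨y, mem_R2_of_algebraMap n y p hp, 0, (R2 n).zero_mem, ?_⟩
    apply Subtype.ext
    push_cast
    show Su n * (↑y : Salg n) = ↑y * Su n + 0
    simp only [Subring.coe_subtype] at hp
    rw [← hp, add_zero]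
    exact ((Algebra.commutes p (Su n)).symm)
  · have hySg : (↑y : Salg n) = Sg n := hy
    refine ⟨rho' n (Polynomial.C (MvPolynomial.C (zeta n)⁻¹) * Polynomial.X),
      RingHom.mem_range.mpr ⟨_, rfl⟩, 0, (R2 n).zero_mem, ?_⟩
    apply Subtype.ext
    push_cast
    show Su n * (↑y : Salg n)
      = ↑(rho' n (Polynomial.C (MvPolynomial.C (zeta n)⁻¹) * Polynomial.X)) * Su n + 0
    rw [coe_rho'_CX, hySg, add_zero]
    exact Sug n

lemma h2B2 : ∀ a : ↥(R2 n), ∃ r b : ↥(R2 n),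
    uB n * (↑r : ↥(B2 n)) = ↑a * uB n + ↑b := by
  refine h2_of_closure (R2 n) (uB n) (gens2 n) (closure_gens2 n).ge (closure_gens2 n).le ?_
  rintro y (⟨p, hp⟩ | hy)
  · refine ⟨y, mem_R2_of_algebraMap n y p hp, 0, (R2 n).zero_mem, ?_⟩
    apply Subtype.ext
    push_cast
    show Su n * (↑y : Salg n) = ↑y * Su n + 0
    simp only [Subring.coe_subtype] at hp
    rw [← hp, add_zero]
    exact ((Algebra.commutes p (Su n)).symm)
  · have hySg : (↑y : Salg n) = Sg n := hy
    refine ⟨rho' n (Polynomial.C (MvPolynomial.C (zeta n)) * Polynomial.X),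
      RingHom.mem_range.mpr ⟨_, rfl⟩, 0, (R2 n).zero_mem, ?_⟩
    apply Subtype.ext
    push_cast
    show Su n * (↑(rho' n (Polynomial.C (MvPolynomial.C (zeta n)) * Polynomial.X)) : Salg n)
      = ↑y * Su n + 0
    rw [coe_rho'_CX, hySg, add_zero]
    exact Sug' n

lemma h3B2 : ∀ s : ↥(B2 n), ∃ d, s ∈ Gf (R2 n) (uB n) d := by
  refine h3_of_closure (R2 n) (uB n) (h1B2 n) ((B2 n).subtype ⁻¹' (gensB2 n))
    (closure_subtype (B2 n) (gensB2 n) rfl) ?_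
  rintro y (⟨p, hp⟩ | hy)
  · exact ⟨1, mem_Gf_of_mem _ _ (mem_R2_of_algebraMap n y p hp) Nat.one_pos⟩
  · rcases hy with hy | hy
    · exact ⟨1, mem_Gf_of_mem _ _ (mem_R2_of_Sg n y hy) Nat.one_pos⟩
    · have : y = uB n := Subtype.ext hy
      rw [this]
      exact ⟨2, by simpa using xpow_mem_Gf (R2 n) (uB n) (show 1 < 2 by omega)⟩

lemma hB2 : IsNoetherianRing ↥(B2 n) :=
  core (R2 n) (uB n) (h1B2 n) (h2B2 n) (h3B2 n) (hR2 n)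

lemma hB2op : IsNoetherianRing (↥(B2 n))ᵐᵒᵖ :=
  coreOp (R2 n) (uB n) (h1B2 n) (h2B2 n) (h3B2 n) (hR2op n)

lemma top_closure : ∀ z : Salg n, z ∈ Subring.closure (gensB2 n ∪ {Sv n}) := by
  intro z
  obtain ⟨w, rfl⟩ := RingQuot.mkAlgHom_surjective (Cpoly n) (Srel n) z
  refine FreeAlgebra.induction (Cpoly n) (Fin 3) (fun r => ?_) (fun i => ?_)
    (fun a b ha hb => ?_) (fun a b ha hb => ?_) w
  · rw [AlgHom.commutes]
    exact Subring.subset_closure (Or.inl (Or.inl ⟨r, rfl⟩))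
  · fin_cases i
    · exact Subring.subset_closure (Or.inl (by simp [gensB2, Su]))
    · exact Subring.subset_closure (Or.inr (by simp [Sv]))
    · exact Subring.subset_closure (Or.inl (by simp [gensB2, Sg]))
  · rw [map_mul]; exact mul_mem ha hb
  · rw [map_add]; exact add_mem ha hb

lemma h1S : ∀ r : ↥(B2 n), ∃ a b : ↥(B2 n),
    Sv n * (↑r : Salg n) = ↑a * Sv n + ↑b := by
  refine h1_of_closure (B2 n) (Sv n) (gensB2 n) le_rfl le_rfl ?_
  rintro y (⟨p, hp⟩ | hy)
  · exact ⟨y, hp ▸ algebraMap_mem_B2 n p, 0, (B2 n).zero_mem,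
      by rw [← hp, add_zero]; exact (Algebra.commutes p (Sv n)).symm⟩
  · rcases hy with hy | hy
    · refine ⟨aC n (zeta n) * Sg n, (B2 n).mul_mem (algebraMap_mem_B2 n _) (Sg_mem_B2 n),
        0, (B2 n).zero_mem, ?_⟩
      rw [hy, add_zero]
      exact Svg n
    · refine ⟨Su n, Su_mem_B2 n, -Eelt n, (B2 n).neg_mem (Eelt_mem_B2 n), ?_⟩
      rw [hy]
      exact Svu n

lemma h2S : ∀ a : ↥(B2 n), ∃ r b : ↥(B2 n),
    Sv n * (↑r : Salg n) = ↑a * Sv n + ↑b := by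
  refine h2_of_closure (B2 n) (Sv n) (gensB2 n) le_rfl le_rfl ?_
  rintro y (⟨p, hp⟩ | hy)
  · exact ⟨y, hp ▸ algebraMap_mem_B2 n p, 0, (B2 n).zero_mem,
      by rw [← hp, add_zero]; exact (Algebra.commutes p (Sv n)).symm⟩
  · rcases hy with hy | hy
    · refine ⟨aC n (zeta n)⁻¹ * Sg n, (B2 n).mul_mem (algebraMap_mem_B2 n _) (Sg_mem_B2 n),
        0, (B2 n).zero_mem, ?_⟩
      rw [hy, add_zero]
      exact Svg' n
    · refine ⟨Su n, Su_mem_B2 n, -Eelt n, (B2 n).neg_mem (Eelt_mem_B2 n), ?_⟩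
      rw [hy]
      exact Svu n

lemma h3S : ∀ s : Salg n, ∃ d, s ∈ Gf (B2 n) (Sv n) d := by
  refine h3_of_closure (B2 n) (Sv n) (h1S n) (gensB2 n ∪ {Sv n}) (top_closure n) ?_
  rintro y (hy | hy)
  · exact ⟨1, mem_Gf_of_mem _ _ (Subring.subset_closure hy) Nat.one_pos⟩
  · rw [hy]
    exact ⟨2, by simpa using xpow_mem_Gf (B2 n) (Sv n) (show 1 < 2 by omega)⟩

lemma main : IsNoetherianRing (Salg n) :=
  core (B2 n) (Sv n) (h1S n) (h2S n) (h3S n) (hB2 n)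

lemma mainOp : IsNoetherianRing (Salg n)ᵐᵒᵖ :=
  coreOp (B2 n) (Sv n) (h1S n) (h2S n) (h3S n) (hB2op n)

end Stmt8

theorem stmt8 (n : ℕ) (hn : 1 ≤ n) :
    IsNoetherianRing (Salg n) ∧ IsNoetherianRing (Salg n)ᵐᵒᵖ := by
  exact ⟨Stmt8.main n, Stmt8.mainOp n⟩

end
end
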